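/- Let H be a Hopf algebra and B an algebra, and consider the convolution algebra L(H,B) of linear maps with product (f*g)(h) = Σ f(h₁)g(h₂) and unit u(h) = ε(h)1. The map sending a left gauge transformation α of B ⊗ H to τ_α ∈ L(H,B), τ_α(h) = (id ⊗ ε)(α(1 ⊗ h)), is a group anti-homomorphism from the group of left gauge transformations (under composition) onto the group of convolution invertible unital linear maps H → B in L(H,B). -/

import Mathlib

/-!
A left `B`-linear map `α` of `B ⊗ H` commuting with the coaction `id ⊗ Δ` is determined by `τ_α`:
applying `id ⊗ ε ⊗ id` to the colinearity identity `(α ⊗ id) ∘ (id ⊗ Δ) = (id ⊗ Δ) ∘ α` gives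
`α (b ⊗ h) = ∑ b τ_α(h₁) ⊗ h₂`. Conversely, by coassociativity every map of this shape is
`B`-linear and colinear, and composing with it turns `τ_α` into `σ * τ_α`. So `α ↦ τ_α` reverses
composition into convolution, the identity corresponds to the convolution unit, and convolution
inverses give inverse gauge transformations.
-/

open TensorProduct

variable {k : Type*} [Field k]
variable {H : Type*} [Ring H] [HopfAlgebra k H]
variable {B : Type*} [Ring B] [Algebra k B]

noncomputable def conv (f g : H →ₗ[k] B) : H →ₗ[k] B :=
  LinearMap.mul' k B ∘ₗ TensorProduct.map f g ∘ₗ Coalgebra.comul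

noncomputable def convUnit : H →ₗ[k] B :=
  Algebra.linearMap k B ∘ₗ Coalgebra.counit

/-- `τ_α(h) = (id ⊗ ε)(α(1 ⊗ h))`. -/
noncomputable def tauOf (α : B ⊗[k] H →ₗ[k] B ⊗[k] H) : H →ₗ[k] B :=
  (TensorProduct.rid k B).toLinearMap ∘ₗ
    (TensorProduct.map LinearMap.id (Coalgebra.counit : H →ₗ[k] k)) ∘ₗ
    α ∘ₗ (TensorProduct.mk k B H 1)

def IsLeftGauge (α : B ⊗[k] H →ₗ[k] B ⊗[k] H) : Prop :=
  Function.Bijective α ∧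
  (∀ (a : B) (z : B ⊗[k] H), α (a • z) = a • α z) ∧
  ((TensorProduct.map α LinearMap.id) ∘ₗ
      (TensorProduct.assoc k B H H).symm.toLinearMap ∘ₗ
      (TensorProduct.map LinearMap.id (Coalgebra.comul : H →ₗ[k] H ⊗[k] H))
    = (TensorProduct.assoc k B H H).symm.toLinearMap ∘ₗ
      (TensorProduct.map LinearMap.id (Coalgebra.comul : H →ₗ[k] H ⊗[k] H)) ∘ₗ α) ∧
  (∀ a : B, α (a ⊗ₜ[k] (1 : H)) = a ⊗ₜ[k] (1 : H))

open Coalgebra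

section Comodule

variable {R M N C : Type*} [CommSemiring R] [AddCommMonoid M] [Module R M]
  [AddCommMonoid N] [Module R N] [AddCommMonoid C] [Module R C] [Coalgebra R C]

variable (R M C) in
noncomputable def counitRight : M ⊗[R] C →ₗ[R] M :=
  (TensorProduct.rid R M).toLinearMap ∘ₗ TensorProduct.map LinearMap.id counit

variable (R M C) in
noncomputable def coaction : M ⊗[R] C →ₗ[R] (M ⊗[R] C) ⊗[R] C :=
  (TensorProduct.assoc R M C C).symm.toLinearMap ∘ₗ TensorProduct.map LinearMap.id comul

@[simp]
lemma counitRight_tmul (m : M) (c : C) : counitRight R M C (m ⊗ₜ c) = counit (R := R) c • m := by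
  simp [counitRight]

lemma counitRight_comul (c : C) : counitRight R C C (comul c) = c := by
  simp [counitRight, ← LinearMap.lTensor_def]

lemma coaction_tmul (m : M) (c : C) :
    coaction R M C (m ⊗ₜ c) = (TensorProduct.mk R M C m).rTensor C (comul c) := by
  simp only [coaction, LinearMap.comp_apply, map_tmul, LinearMap.id_apply, LinearEquiv.coe_coe]
  induction comul (R := R) c using TensorProduct.induction_on with
  | zero => simp
  | tmul a b => simp
  | add x y hx hy => simp [tmul_add, hx, hy]

lemma counitRight_comp_rTensor (f : M →ₗ[R] N) :
    counitRight R N C ∘ₗ f.rTensor C = f ∘ₗ counitRight R M C := by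
  ext; simp

lemma coaction_comp_rTensor (f : M →ₗ[R] N) :
    coaction R N C ∘ₗ f.rTensor C = (f.rTensor C).rTensor C ∘ₗ coaction R M C := by
  ext m c
  simp only [TensorProduct.AlgebraTensorModule.curry_apply, TensorProduct.curry_apply,
    LinearMap.coe_restrictScalars, LinearMap.comp_apply, LinearMap.rTensor_tmul, coaction_tmul,
    ← LinearMap.rTensor_comp_apply]
  rfl

lemma rTensor_counitRight_comp_coaction :
    (counitRight R M C).rTensor C ∘ₗ coaction R M C = .id := by
  ext m c
  have : counitRight R M C ∘ₗ TensorProduct.mk R M C m =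
      LinearMap.toSpanSingleton R M m ∘ₗ counit := by
    ext; simp
  simp only [TensorProduct.AlgebraTensorModule.curry_apply, TensorProduct.curry_apply,
    LinearMap.coe_restrictScalars, LinearMap.comp_apply, coaction_tmul]
  rw [← LinearMap.rTensor_comp_apply, this, LinearMap.rTensor_comp_apply, rTensor_counit_comul]
  simp

lemma counitRight_comp_coaction :
    counitRight R (M ⊗[R] C) C ∘ₗ coaction R M C = .id := by
  ext m c
  simp only [TensorProduct.AlgebraTensorModule.curry_apply, TensorProduct.curry_apply,
    LinearMap.coe_restrictScalars, LinearMap.comp_apply, coaction_tmul]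
  rw [← LinearMap.comp_apply (counitRight R _ C), counitRight_comp_rTensor, LinearMap.comp_apply,
    counitRight_comul]
  rfl

lemma rTensor_coaction_comp_coaction :
    (coaction R M C).rTensor C ∘ₗ coaction R M C =
      coaction R (M ⊗[R] C) C ∘ₗ coaction R M C := by
  ext m c
  have hm : coaction R M C ∘ₗ TensorProduct.mk R M C m =
      (TensorProduct.mk R M C m).rTensor C ∘ₗ comul := by
    ext; simp [coaction_tmul]
  have hC : coaction R C C (comul c) = comul.rTensor C (comul c) := by
    simp [coaction, ← LinearMap.lTensor_def]
  simp only [TensorProduct.AlgebraTensorModule.curry_apply, TensorProduct.curry_apply,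
    LinearMap.coe_restrictScalars, LinearMap.comp_apply, coaction_tmul]
  rw [← LinearMap.comp_apply (coaction R (M ⊗[R] C) C), coaction_comp_rTensor,
    LinearMap.comp_apply, hC, ← LinearMap.rTensor_comp_apply, hm, LinearMap.rTensor_comp_apply]

end Comodule

section Gauge

variable {R A C : Type*} [CommSemiring R] [Semiring A] [Algebra R A]

section

variable [AddCommMonoid C] [Module R C] [Coalgebra R C]

/-- `gaugeOf τ (b ⊗ h) = ∑ b τ(h₁) ⊗ h₂`. -/
noncomputable def gaugeOf (τ : C →ₗ[R] A) : A ⊗[R] C →ₗ[R] A ⊗[R] C :=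
  (LinearMap.mul' R A ∘ₗ τ.lTensor A).rTensor C ∘ₗ coaction R A C

lemma counitRight_smul (a : A) (z : A ⊗[R] C) :
    counitRight R A C (a • z) = a * counitRight R A C z := by
  induction z using TensorProduct.induction_on with
  | zero => simp
  | tmul b c => simp [smul_tmul']
  | add x y hx hy => simp [hx, hy, mul_add]

lemma gaugeOf_smul (τ : C →ₗ[R] A) (a : A) (z : A ⊗[R] C) :
    gaugeOf τ (a • z) = a • gaugeOf τ z := by
  induction z using TensorProduct.induction_on with
  | zero => simp
  | tmul b c =>
    simp only [gaugeOf, smul_tmul', smul_eq_mul, LinearMap.comp_apply, coaction_tmul]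
    induction comul (R := R) c using TensorProduct.induction_on with
    | zero => simp
    | tmul x y => simp [smul_tmul', mul_assoc]
    | add x y hx hy => simp [hx, hy]
  | add x y hx hy => simp [hx, hy]

lemma gaugeOf_comp_mk_one (τ : C →ₗ[R] A) :
    gaugeOf τ ∘ₗ TensorProduct.mk R A C 1 = τ.rTensor C ∘ₗ comul := by
  ext c
  have : (LinearMap.mul' R A ∘ₗ τ.lTensor A) ∘ₗ TensorProduct.mk R A C 1 = τ := by
    ext; simp
  simp only [gaugeOf, LinearMap.comp_apply, TensorProduct.mk_apply, coaction_tmul,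
    ← LinearMap.rTensor_comp_apply, this]

lemma counitRight_comp_gaugeOf (τ : C →ₗ[R] A) :
    counitRight R A C ∘ₗ gaugeOf τ = LinearMap.mul' R A ∘ₗ τ.lTensor A := by
  rw [gaugeOf, ← LinearMap.comp_assoc, counitRight_comp_rTensor, LinearMap.comp_assoc,
    counitRight_comp_coaction, LinearMap.comp_id]

lemma rTensor_gaugeOf_comp_coaction (τ : C →ₗ[R] A) :
    (gaugeOf τ).rTensor C ∘ₗ coaction R A C = coaction R A C ∘ₗ gaugeOf τ := by
  rw [gaugeOf, LinearMap.rTensor_comp, LinearMap.comp_assoc, rTensor_coaction_comp_coaction,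
    ← LinearMap.comp_assoc, ← coaction_comp_rTensor, LinearMap.comp_assoc]

end

lemma gaugeOf_tmul_one [Semiring C] [Bialgebra R C] (τ : C →ₗ[R] A) (a : A) :
    gaugeOf τ (a ⊗ₜ 1) = (a * τ 1) ⊗ₜ 1 := by
  simp [gaugeOf, coaction_tmul, Bialgebra.comul_one, Algebra.TensorProduct.one_def]

end Gauge

lemma counitRight_comp_eq_of_map_smul {α : B ⊗[k] H →ₗ[k] B ⊗[k] H}
    (hα : ∀ (a : B) (z : B ⊗[k] H), α (a • z) = a • α z) :
    counitRight k B H ∘ₗ α = LinearMap.mul' k B ∘ₗ (tauOf α).lTensor B := by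
  ext b h
  have : b ⊗ₜ[k] h = b • ((1 : B) ⊗ₜ[k] h) := by simp [smul_tmul']
  change counitRight k B H (α (b ⊗ₜ h)) = b * tauOf α h
  rw [this, hα, counitRight_smul]
  rfl

lemma eq_gaugeOf_tauOf {α : B ⊗[k] H →ₗ[k] B ⊗[k] H}
    (hsmul : ∀ (a : B) (z : B ⊗[k] H), α (a • z) = a • α z)
    (hcolin : α.rTensor H ∘ₗ coaction k B H = coaction k B H ∘ₗ α) :
    α = gaugeOf (tauOf α) := calc
  α = ((counitRight k B H).rTensor H ∘ₗ coaction k B H) ∘ₗ α := by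
    rw [rTensor_counitRight_comp_coaction, LinearMap.id_comp]
  _ = (counitRight k B H ∘ₗ α).rTensor H ∘ₗ coaction k B H := by
    rw [LinearMap.comp_assoc, ← hcolin, LinearMap.rTensor_comp, LinearMap.comp_assoc]
  _ = gaugeOf (tauOf α) := by rw [counitRight_comp_eq_of_map_smul hsmul, gaugeOf]

lemma tauOf_gaugeOf (τ : H →ₗ[k] B) : tauOf (gaugeOf τ) = τ := by
  ext h
  have := LinearMap.congr_fun (counitRight_comp_gaugeOf τ) (1 ⊗ₜ h)
  simp only [LinearMap.comp_apply, LinearMap.lTensor_tmul, LinearMap.mul'_apply, one_mul] at this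
  exact this

lemma tauOf_comp_gaugeOf {α : B ⊗[k] H →ₗ[k] B ⊗[k] H}
    (hα : ∀ (a : B) (z : B ⊗[k] H), α (a • z) = a • α z) (σ : H →ₗ[k] B) :
    tauOf (α ∘ₗ gaugeOf σ) = conv σ (tauOf α) := calc
  tauOf (α ∘ₗ gaugeOf σ) =
      (counitRight k B H ∘ₗ α) ∘ₗ (gaugeOf σ ∘ₗ TensorProduct.mk k B H 1) := rfl
  _ = conv σ (tauOf α) := by
    rw [counitRight_comp_eq_of_map_smul hα, gaugeOf_comp_mk_one, conv,
      ← LinearMap.lTensor_comp_rTensor]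
    rfl

lemma gaugeOf_comp (σ τ : H →ₗ[k] B) : gaugeOf τ ∘ₗ gaugeOf σ = gaugeOf (conv σ τ) := by
  have hsmul : ∀ (a : B) (z : B ⊗[k] H), (gaugeOf τ ∘ₗ gaugeOf σ) (a • z) =
      a • (gaugeOf τ ∘ₗ gaugeOf σ) z := by
    simp [gaugeOf_smul]
  have hcolin : (gaugeOf τ ∘ₗ gaugeOf σ).rTensor H ∘ₗ coaction k B H =
      coaction k B H ∘ₗ gaugeOf τ ∘ₗ gaugeOf σ := by
    rw [LinearMap.rTensor_comp, LinearMap.comp_assoc, rTensor_gaugeOf_comp_coaction,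
      ← LinearMap.comp_assoc, rTensor_gaugeOf_comp_coaction, LinearMap.comp_assoc]
  rw [eq_gaugeOf_tauOf hsmul hcolin, tauOf_comp_gaugeOf (gaugeOf_smul τ), tauOf_gaugeOf]

lemma tauOf_id : tauOf (LinearMap.id : B ⊗[k] H →ₗ[k] B ⊗[k] H) = convUnit := by
  ext h
  simp [tauOf, convUnit, Algebra.algebraMap_eq_smul_one]

lemma gaugeOf_convUnit : gaugeOf (convUnit : H →ₗ[k] B) = LinearMap.id := by
  have hcolin : (LinearMap.id : B ⊗[k] H →ₗ[k] B ⊗[k] H).rTensor H ∘ₗ coaction k B H =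
      coaction k B H ∘ₗ LinearMap.id := by
    rw [LinearMap.rTensor_id, LinearMap.id_comp, LinearMap.comp_id]
  rw [← tauOf_id, ← eq_gaugeOf_tauOf (fun _ _ => rfl) hcolin]

namespace IsLeftGauge

variable {α β : B ⊗[k] H →ₗ[k] B ⊗[k] H}

lemma eq_gaugeOf (hα : IsLeftGauge α) : α = gaugeOf (tauOf α) :=
  eq_gaugeOf_tauOf hα.2.1 hα.2.2.1

lemma tauOf_comp (hα : IsLeftGauge α) (hβ : IsLeftGauge β) :
    tauOf (α ∘ₗ β) = conv (tauOf β) (tauOf α) := by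
  have := tauOf_comp_gaugeOf hα.2.1 (tauOf β)
  rwa [← hβ.eq_gaugeOf] at this

lemma tauOf_one (hα : IsLeftGauge α) : tauOf α 1 = 1 := by
  change counitRight k B H (α (1 ⊗ₜ 1)) = 1
  rw [hα.2.2.2, counitRight_tmul, Bialgebra.counit_one, one_smul]

lemma of_inverse (hα : IsLeftGauge α) (hβα : β ∘ₗ α = .id) (hαβ : α ∘ₗ β = .id) :
    IsLeftGauge β := by
  obtain ⟨hbij, hsmul, hcolin, hunit⟩ := hα
  have hαβ' (z : B ⊗[k] H) : α (β z) = z := LinearMap.congr_fun hαβ z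
  refine ⟨Function.bijective_iff_has_inverse.mpr
      ⟨α, LinearMap.congr_fun hαβ, LinearMap.congr_fun hβα⟩,
    fun a z => hbij.1 ?_, ?_, fun a => hbij.1 ?_⟩
  · rw [hsmul, hαβ', hαβ']
  · have hcolin' : α.rTensor H ∘ₗ coaction k B H = coaction k B H ∘ₗ α := hcolin
    refine LinearMap.ext fun z => ?_
    change β.rTensor H (coaction k B H z) = coaction k B H (β z)
    conv_lhs => rw [← hαβ' z]
    rw [← LinearMap.comp_apply (coaction k B H), ← hcolin', LinearMap.comp_apply,
      ← LinearMap.rTensor_comp_apply, hβα, LinearMap.rTensor_id_apply]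
  · rw [hαβ', hunit]

end IsLeftGauge

lemma isLeftGauge_gaugeOf {τ τ' : H →ₗ[k] B} (hτ : τ 1 = 1) (hτ'τ : conv τ' τ = convUnit)
    (hττ' : conv τ τ' = convUnit) : IsLeftGauge (gaugeOf τ) := by
  have h₁ : gaugeOf τ ∘ₗ gaugeOf τ' = .id := by rw [gaugeOf_comp, hτ'τ, gaugeOf_convUnit]
  have h₂ : gaugeOf τ' ∘ₗ gaugeOf τ = .id := by rw [gaugeOf_comp, hττ', gaugeOf_convUnit]
  exact ⟨Function.bijective_iff_has_inverse.mpr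
    ⟨gaugeOf τ', LinearMap.congr_fun h₂, LinearMap.congr_fun h₁⟩, gaugeOf_smul τ,
    rTensor_gaugeOf_comp_coaction τ, fun a => by rw [gaugeOf_tmul_one, hτ, mul_one]⟩

/-- `α ↦ τ_α` is a group anti-homomorphism from the group of left gauge
transformations onto the group of convolution invertible unital linear maps. -/
theorem statement_15 :
    (∀ α β : B ⊗[k] H →ₗ[k] B ⊗[k] H, IsLeftGauge α → IsLeftGauge β →
      tauOf (α ∘ₗ β) = conv (tauOf β) (tauOf α)) ∧
    (∀ α : B ⊗[k] H →ₗ[k] B ⊗[k] H, IsLeftGauge α →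
      tauOf α 1 = 1 ∧
      ∃ τ' : H →ₗ[k] B, conv τ' (tauOf α) = (convUnit : H →ₗ[k] B) ∧
        conv (tauOf α) τ' = (convUnit : H →ₗ[k] B)) ∧
    (∀ τ : H →ₗ[k] B, τ 1 = 1 →
      (∃ τ' : H →ₗ[k] B, conv τ' τ = (convUnit : H →ₗ[k] B) ∧
        conv τ τ' = (convUnit : H →ₗ[k] B)) →
      ∃ α : B ⊗[k] H →ₗ[k] B ⊗[k] H, IsLeftGauge α ∧ tauOf α = τ) := by
  refine ⟨fun α β hα hβ => hα.tauOf_comp hβ, fun α hα => ?_,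
    fun τ hτ ⟨τ', hτ'τ, hττ'⟩ => ⟨gaugeOf τ, isLeftGauge_gaugeOf hτ hτ'τ hττ', tauOf_gaugeOf τ⟩⟩
  let e := LinearEquiv.ofBijective α hα.1
  have hβα : e.symm.toLinearMap ∘ₗ α = .id := LinearMap.ext e.symm_apply_apply
  have hαβ : α ∘ₗ e.symm.toLinearMap = .id := LinearMap.ext e.apply_symm_apply
  have hβ := hα.of_inverse hβα hαβ
  refine ⟨hα.tauOf_one, tauOf e.symm.toLinearMap, ?_, ?_⟩
  · rw [← hα.tauOf_comp hβ, hαβ, tauOf_id]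
  · rw [← hβ.tauOf_comp hα, hβα, tauOf_id]
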